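/- arXiv:1701.00625 — 2 statements merged into one kernel-verified Lean document; each statement's English description precedes it below -/
import Mathlib

section
/- The coefficient operators of the normalized partial sums satisfy the Rackauskas–Suquet conditions: fix s₁,…,s_p ∈ S with h(s_i) ∈ (1/2,1) for each i, and set A_{nj} = diag(n^{d(s₁)−3/2} a_{nj}(s₁), …, n^{d(s_p)−3/2} a_{nj}(s_p)), so that ‖A_{nj}‖_op = max_{1≤i≤p} |n^{d(s_i)−3/2} a_{nj}(s_i)|. Then lim_{n→∞} sup_{j∈ℤ} ‖A_{nj}‖_op = 0 and limsup_{n→∞} ∑_{j∈ℤ} ‖A_{nj}‖_op² < ∞. -/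
/-!
Write `h = Re z ∈ (1/2, 1)`, so that `‖(m+1)^{-z}‖ = (m+1)^{-h}`. Concavity of `t ↦ t^{1-h}`
gives `(1-h)(m+1)^{-h} ≤ (m+1)^{1-h} - m^{1-h}`, hence the partial sums telescope to
`‖a_{nj}‖ ≤ (n-j+1)^{1-h}/(1-h)`, while for `j ≤ 0` each of the `n` terms is at most `(1-j)^{-h}`.
After the normalisation by `n^{h-3/2}`, the first bound is `O(n^{-1/2})` on the `2n` indices
`-n < j ≤ n` (and `a_{nj} = 0` for `j > n`), and the second gives `n^{h-1/2}(1-j)^{-h} ≤ n^{-1/2}`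
for `j ≤ -n`, whose squares sum to at most `n^{2h-1} ∫_n^∞ t^{-2h} dt = 1/(2h-1)` because `h > 1/2`.
The operator norm of the diagonal matrix is the largest entry, which is dominated by the sum of
the entries, and its square by the sum of their squares.
-/

open Filter Finset
open scoped ENNReal

lemma one_sub_mul_rpow_neg_le_sub {r : ℝ} (hr0 : 0 ≤ r) (hr1 : r ≤ 1) {x : ℝ} (hx : 0 ≤ x) :
    (1 - r) * (x + 1) ^ (-r) ≤ (x + 1) ^ (1 - r) - x ^ (1 - r) := by
  have hderiv : HasDerivAt (fun t : ℝ => t ^ (1 - r)) ((1 - r) * (x + 1) ^ (1 - r - 1)) (x + 1) :=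
    Real.hasDerivAt_rpow_const (Or.inl (by linarith))
  have := (Real.concaveOn_rpow (by linarith) (by linarith)).le_slope_of_hasDerivAt
    (Set.mem_Ici.2 hx) (Set.mem_Ici.2 (by linarith)) (by linarith) hderiv
  rwa [slope_def_field, add_sub_cancel_left, div_one, sub_sub_cancel_left] at this

lemma sum_range_rpow_neg_le_of_one_lt {q : ℝ} (hq : 1 < q) {c : ℝ} (hc : 0 < c) (N : ℕ) :
    ∑ u ∈ range N, (c + 1 + u) ^ (-q) ≤ c ^ (1 - q) / (q - 1) := by
  have hanti : AntitoneOn (fun t : ℝ => t ^ (-q)) (Set.Icc c (c + N)) := fun x hx y _ hxy =>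
    Real.rpow_le_rpow_of_nonpos (hc.trans_le hx.1) hxy (by linarith)
  have hzero : (0 : ℝ) ∉ Set.uIcc c (c + N) := by
    rw [Set.uIcc_of_le (by simp)]
    exact fun h => hc.not_ge h.1
  calc ∑ u ∈ range N, (c + 1 + u) ^ (-q)
      = ∑ u ∈ range N, (c + ((u + 1 : ℕ) : ℝ)) ^ (-q) := by push_cast; ring_nf
    _ ≤ ∫ t in c..c + N, t ^ (-q) := hanti.sum_le_integral
    _ = (c ^ (1 - q) - (c + N) ^ (1 - q)) / (q - 1) := by
        rw [integral_rpow (Or.inr ⟨by linarith, hzero⟩), show -q + 1 = 1 - q by ring,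
          ← neg_sub q 1, div_neg, ← neg_div, neg_sub]
    _ ≤ c ^ (1 - q) / (q - 1) := by
        gcongr
        exact sub_le_self _ (Real.rpow_nonneg (by positivity) _)

lemma sq_iSup_le_sum_sq {ι : Type*} [Fintype ι] {f : ι → ℝ} (hf : ∀ i, 0 ≤ f i) :
    (⨆ i, f i) ^ 2 ≤ ∑ i, f i ^ 2 := by
  have hle : ⨆ i, f i ≤ √(∑ i, f i ^ 2) :=
    Real.iSup_le (fun i => Real.le_sqrt_of_sq_le
      (single_le_sum (fun j _ => sq_nonneg (f j)) (mem_univ i))) (Real.sqrt_nonneg _)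
  calc (⨆ i, f i) ^ 2 ≤ √(∑ i, f i ^ 2) ^ 2 := pow_le_pow_left₀ (Real.iSup_nonneg hf) hle 2
    _ = ∑ i, f i ^ 2 := Real.sq_sqrt (sum_nonneg fun i _ => sq_nonneg (f i))

lemma tsum_int_eq_sum_range_add_tsum_nat {f : ℤ → ℝ≥0∞} {n : ℕ}
    (hf : ∀ j, (n : ℤ) < j → f j = 0) (m : ℕ) :
    ∑' j, f j = ∑ t ∈ range m, f (n - t) + ∑' u : ℕ, f (n - (u + m : ℕ)) := by
  have hinj : Function.Injective fun t : ℕ => (n : ℤ) - t :=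
    sub_right_injective.comp Nat.cast_injective
  rw [← hinj.tsum_eq fun j hj => ⟨(n - j).toNat, by have := mt (hf j) hj; simp only; omega⟩]
  exact (ENNReal.summable.sum_add_tsum_nat_add' (f := fun t : ℕ => f (n - t))).symm

noncomputable def powerCoeff (z : ℂ) (j : ℤ) : ℂ :=
  if 0 ≤ j then ((j : ℂ) + 1) ^ (-z) else 0

noncomputable def partialSumCoeff (z : ℂ) (n : ℕ) (j : ℤ) : ℂ :=
  ∑ k ∈ Icc (1 : ℤ) n, powerCoeff z (k - j)

noncomputable def normalizedCoeff (z : ℂ) (n : ℕ) (j : ℤ) : ℂ :=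
  (n : ℂ) ^ (z - 3 / 2) * partialSumCoeff z n j

section Coefficients

variable {z : ℂ}

lemma norm_powerCoeff (z : ℂ) (j : ℤ) :
    ‖powerCoeff z j‖ = if 0 ≤ j then ((j : ℝ) + 1) ^ (-z.re) else 0 := by
  unfold powerCoeff
  split_ifs with hj
  · rw [show (j : ℂ) + 1 = (((j : ℝ) + 1 : ℝ) : ℂ) by push_cast; rfl,
      Complex.norm_cpow_eq_rpow_re_of_pos (by positivity), Complex.neg_re]
  · exact norm_zero

lemma partialSumCoeff_zero (z : ℂ) (j : ℤ) : partialSumCoeff z 0 j = 0 := by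
  simp [partialSumCoeff]

lemma partialSumCoeff_succ (z : ℂ) (n : ℕ) (j : ℤ) :
    partialSumCoeff z (n + 1) j = partialSumCoeff z n j + powerCoeff z (n + 1 - j) := by
  rw [partialSumCoeff, Nat.cast_succ, ← insert_Icc_right_eq_Icc_add_one (by omega),
    sum_insert (by simp), add_comm, partialSumCoeff]

lemma partialSumCoeff_eq_zero_of_lt {n : ℕ} {j : ℤ} (hj : (n : ℤ) < j) :
    partialSumCoeff z n j = 0 :=
  sum_eq_zero fun k hk => if_neg (by simp only [mem_Icc] at hk; omega)

/- Writing the antiderivative as `max x 0 ^ (1 - re z)` makes the telescoping bound hold for every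
`m : ℤ`, the terms with `m < 0` contributing `0 ≤ 0`. -/
lemma one_sub_re_mul_norm_powerCoeff_le (h0 : 0 ≤ z.re) (h1 : z.re ≤ 1) (m : ℤ) :
    (1 - z.re) * ‖powerCoeff z m‖
      ≤ max ((m : ℝ) + 1) 0 ^ (1 - z.re) - max (m : ℝ) 0 ^ (1 - z.re) := by
  rw [norm_powerCoeff]
  split_ifs with hm
  · have hm' : (0 : ℝ) ≤ m := by exact_mod_cast hm
    rw [max_eq_left (by linarith), max_eq_left hm']
    exact one_sub_mul_rpow_neg_le_sub h0 h1 hm'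
  · have hm' : (m : ℝ) + 1 ≤ 0 := by exact_mod_cast (by omega : m + 1 ≤ 0)
    rw [max_eq_right hm', max_eq_right (by linarith)]
    simp

lemma one_sub_re_mul_norm_partialSumCoeff_le (h0 : 0 ≤ z.re) (h1 : z.re ≤ 1) (n : ℕ) (j : ℤ) :
    (1 - z.re) * ‖partialSumCoeff z n j‖
      ≤ max ((n : ℝ) - j + 1) 0 ^ (1 - z.re) - max (1 - (j : ℝ)) 0 ^ (1 - z.re) := by
  induction n with
  | zero => simp [partialSumCoeff_zero, sub_eq_neg_add]
  | succ n ih =>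
    have hstep := one_sub_re_mul_norm_powerCoeff_le h0 h1 ((n : ℤ) + 1 - j)
    push_cast at hstep ⊢
    calc (1 - z.re) * ‖partialSumCoeff z (n + 1) j‖
        ≤ (1 - z.re) * ‖partialSumCoeff z n j‖ + (1 - z.re) * ‖powerCoeff z (n + 1 - j)‖ := by
          rw [partialSumCoeff_succ, ← mul_add]
          exact mul_le_mul_of_nonneg_left (norm_add_le _ _) (by linarith)
      _ ≤ _ := by ring_nf at ih hstep ⊢; linarith

lemma norm_partialSumCoeff_le (h0 : 0 ≤ z.re) (h1 : z.re < 1) (n : ℕ) (j : ℤ) :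
    ‖partialSumCoeff z n j‖ ≤ max ((n : ℝ) - j + 1) 0 ^ (1 - z.re) / (1 - z.re) := by
  rw [le_div_iff₀ (by linarith), mul_comm]
  have := one_sub_re_mul_norm_partialSumCoeff_le h0 h1.le n j
  have : 0 ≤ max (1 - (j : ℝ)) 0 ^ (1 - z.re) := Real.rpow_nonneg (le_max_right _ _) _
  linarith

lemma norm_partialSumCoeff_le_of_nonpos (h0 : 0 ≤ z.re) (n : ℕ) {j : ℤ} (hj : j ≤ 0) :
    ‖partialSumCoeff z n j‖ ≤ n * (1 - (j : ℝ)) ^ (-z.re) := by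
  induction n with
  | zero => simp [partialSumCoeff_zero]
  | succ n ih =>
    have hj' : (j : ℝ) ≤ 0 := by exact_mod_cast hj
    have hterm : ‖powerCoeff z (n + 1 - j)‖ ≤ (1 - (j : ℝ)) ^ (-z.re) := by
      rw [norm_powerCoeff, if_pos (by omega)]
      push_cast
      exact Real.rpow_le_rpow_of_nonpos (by linarith)
        (by linarith [(n.cast_nonneg : (0 : ℝ) ≤ n)]) (by linarith)
    rw [partialSumCoeff_succ, Nat.cast_succ, add_one_mul]
    exact (norm_add_le _ _).trans (add_le_add ih hterm)

lemma norm_normalizedCoeff (z : ℂ) {n : ℕ} (hn : 0 < n) (j : ℤ) :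
    ‖normalizedCoeff z n j‖ = (n : ℝ) ^ (z.re - 3 / 2) * ‖partialSumCoeff z n j‖ := by
  rw [normalizedCoeff, norm_mul, Complex.norm_natCast_cpow_of_pos hn]
  norm_num

lemma norm_normalizedCoeff_le_of_neg_lt (h0 : 0 ≤ z.re) (h1 : z.re < 1) {n : ℕ}
    (hn : 0 < n) {j : ℤ} (hj : -(n : ℤ) < j) :
    ‖normalizedCoeff z n j‖ ≤ 2 / (1 - z.re) * (n : ℝ) ^ (-(1 / 2) : ℝ) := by
  have hn' : (0 : ℝ) < n := by exact_mod_cast hn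
  have hmax : max ((n : ℝ) - j + 1) 0 ≤ 2 * n := by
    have : -(n : ℝ) + 1 ≤ j := by exact_mod_cast (by omega : -(n : ℤ) + 1 ≤ j)
    exact max_le (by linarith) (by positivity)
  have htwo : (2 : ℝ) ^ (1 - z.re) ≤ 2 :=
    (Real.rpow_le_rpow_of_exponent_le one_le_two (by linarith)).trans_eq (Real.rpow_one 2)
  rw [norm_normalizedCoeff z hn]
  calc (n : ℝ) ^ (z.re - 3 / 2) * ‖partialSumCoeff z n j‖
      ≤ (n : ℝ) ^ (z.re - 3 / 2) * ((2 * n) ^ (1 - z.re) / (1 - z.re)) := by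
        gcongr
        exact (norm_partialSumCoeff_le h0 h1 n j).trans (by gcongr)
    _ = 2 ^ (1 - z.re) / (1 - z.re) * ((n : ℝ) ^ (z.re - 3 / 2) * (n : ℝ) ^ (1 - z.re)) := by
        rw [Real.mul_rpow zero_le_two hn'.le]
        ring
    _ ≤ 2 / (1 - z.re) * (n : ℝ) ^ (-(1 / 2) : ℝ) := by
        rw [← Real.rpow_add hn', show z.re - 3 / 2 + (1 - z.re) = -(1 / 2) by ring]
        gcongr

lemma norm_normalizedCoeff_le_of_nonpos (h0 : 0 ≤ z.re) {n : ℕ} (hn : 0 < n) {j : ℤ}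
    (hj : j ≤ 0) :
    ‖normalizedCoeff z n j‖ ≤ (n : ℝ) ^ (z.re - 1 / 2) * (1 - (j : ℝ)) ^ (-z.re) := by
  have hn' : (0 : ℝ) < n := by exact_mod_cast hn
  rw [norm_normalizedCoeff z hn]
  calc (n : ℝ) ^ (z.re - 3 / 2) * ‖partialSumCoeff z n j‖
      ≤ (n : ℝ) ^ (z.re - 3 / 2) * (n * (1 - (j : ℝ)) ^ (-z.re)) := by
        gcongr
        exact norm_partialSumCoeff_le_of_nonpos h0 n hj
    _ = (n : ℝ) ^ (z.re - 1 / 2) * (1 - (j : ℝ)) ^ (-z.re) := by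
        rw [← mul_assoc, ← Real.rpow_add_one hn'.ne', show z.re - 3 / 2 + 1 = z.re - 1 / 2 by ring]

lemma norm_normalizedCoeff_le (h0 : 0 ≤ z.re) (h1 : z.re < 1) {n : ℕ} (hn : 0 < n) (j : ℤ) :
    ‖normalizedCoeff z n j‖ ≤ 2 / (1 - z.re) * (n : ℝ) ^ (-(1 / 2) : ℝ) := by
  rcases lt_or_ge (-(n : ℤ)) j with hj | hj
  · exact norm_normalizedCoeff_le_of_neg_lt h0 h1 hn hj
  have hn' : (0 : ℝ) < n := by exact_mod_cast hn
  have hnj : (n : ℝ) ≤ 1 - j := by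
    have : (j : ℝ) ≤ -n := by exact_mod_cast hj
    linarith
  calc ‖normalizedCoeff z n j‖
      ≤ (n : ℝ) ^ (z.re - 1 / 2) * (1 - (j : ℝ)) ^ (-z.re) :=
        norm_normalizedCoeff_le_of_nonpos h0 hn (by omega)
    _ ≤ (n : ℝ) ^ (z.re - 1 / 2) * (n : ℝ) ^ (-z.re) :=
        mul_le_mul_of_nonneg_left (Real.rpow_le_rpow_of_nonpos hn' hnj (by linarith))
          (by positivity)
    _ = 1 * (n : ℝ) ^ (-(1 / 2) : ℝ) := by
        rw [← Real.rpow_add hn', one_mul, show z.re - 1 / 2 + -z.re = -(1 / 2) by ring]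
    _ ≤ 2 / (1 - z.re) * (n : ℝ) ^ (-(1 / 2) : ℝ) := by
        gcongr
        exact (one_le_div (by linarith)).2 (by linarith)

lemma sum_range_sq_norm_normalizedCoeff_le (h0 : 0 ≤ z.re) (h1 : z.re < 1) {n : ℕ}
    (hn : 0 < n) :
    ∑ t ∈ range (2 * n), ENNReal.ofReal (‖normalizedCoeff z n (n - t)‖ ^ 2)
      ≤ ENNReal.ofReal (8 / (1 - z.re) ^ 2) := by
  have hn' : (0 : ℝ) < n := by exact_mod_cast hn
  have hh1 : 0 < 1 - z.re := by linarith
  calc ∑ t ∈ range (2 * n), ENNReal.ofReal (‖normalizedCoeff z n (n - t)‖ ^ 2)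
      ≤ ∑ t ∈ range (2 * n), ENNReal.ofReal ((2 / (1 - z.re) * (n : ℝ) ^ (-(1 / 2) : ℝ)) ^ 2) := by
        gcongr with t ht
        exact norm_normalizedCoeff_le_of_neg_lt h0 h1 hn (by simp at ht; omega)
    _ = ENNReal.ofReal (8 / (1 - z.re) ^ 2) := by
        rw [sum_const, card_range, nsmul_eq_mul, ← ENNReal.ofReal_natCast,
          ← ENNReal.ofReal_mul (by positivity), mul_pow, ← Real.rpow_mul_natCast hn'.le,
          show (-(1 / 2) : ℝ) * (2 : ℕ) = -1 by norm_num, Real.rpow_neg_one]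
        congr 1
        push_cast
        field_simp
        ring

lemma tsum_sq_norm_normalizedCoeff_tail_le (h12 : 1 / 2 < z.re) {n : ℕ} (hn : 0 < n) :
    ∑' u : ℕ, ENNReal.ofReal (‖normalizedCoeff z n (n - (u + 2 * n : ℕ))‖ ^ 2)
      ≤ ENNReal.ofReal (1 / (2 * z.re - 1)) := by
  have hn' : (0 : ℝ) < n := by exact_mod_cast hn
  refine ENNReal.tsum_le_of_sum_range_le fun N => ?_
  calc ∑ u ∈ range N, ENNReal.ofReal (‖normalizedCoeff z n (n - (u + 2 * n : ℕ))‖ ^ 2)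
      ≤ ∑ u ∈ range N,
          ENNReal.ofReal ((n : ℝ) ^ (2 * z.re - 1) * ((n : ℝ) + 1 + u) ^ (-(2 * z.re))) := by
        gcongr with u
        have hy : 1 - (((n : ℤ) - (u + 2 * n : ℕ) : ℤ) : ℝ) = (n : ℝ) + 1 + u := by
          push_cast; ring
        calc ‖normalizedCoeff z n (n - (u + 2 * n : ℕ))‖ ^ 2
            ≤ ((n : ℝ) ^ (z.re - 1 / 2) * ((n : ℝ) + 1 + u) ^ (-z.re)) ^ 2 := by
              rw [← hy]
              gcongr
              exact norm_normalizedCoeff_le_of_nonpos (by linarith) hn (by omega)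
          _ = (n : ℝ) ^ (2 * z.re - 1) * ((n : ℝ) + 1 + u) ^ (-(2 * z.re)) := by
              rw [mul_pow, ← Real.rpow_mul_natCast hn'.le,
                ← Real.rpow_mul_natCast (by positivity)]
              ring_nf
    _ = ENNReal.ofReal
          ((n : ℝ) ^ (2 * z.re - 1) * ∑ u ∈ range N, ((n : ℝ) + 1 + u) ^ (-(2 * z.re))) := by
        rw [mul_sum, ENNReal.ofReal_sum_of_nonneg fun u _ => by positivity]
    _ ≤ ENNReal.ofReal
          ((n : ℝ) ^ (2 * z.re - 1) * ((n : ℝ) ^ (1 - 2 * z.re) / (2 * z.re - 1))) := by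
        gcongr
        exact sum_range_rpow_neg_le_of_one_lt (by linarith) hn' N
    _ = ENNReal.ofReal (1 / (2 * z.re - 1)) := by
        rw [mul_div_assoc', ← Real.rpow_add hn']
        norm_num

lemma tsum_sq_norm_normalizedCoeff_le (h12 : 1 / 2 < z.re) (h1 : z.re < 1) {n : ℕ}
    (hn : 0 < n) :
    ∑' j : ℤ, ENNReal.ofReal (‖normalizedCoeff z n j‖ ^ 2)
      ≤ ENNReal.ofReal (8 / (1 - z.re) ^ 2 + 1 / (2 * z.re - 1)) := by
  have hh1 : 0 < 1 - z.re := by linarith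
  have hh2 : 0 < 2 * z.re - 1 := by linarith
  rw [tsum_int_eq_sum_range_add_tsum_nat (n := n)
    (fun j hj => by simp [normalizedCoeff, partialSumCoeff_eq_zero_of_lt hj]) (2 * n),
    ENNReal.ofReal_add (by positivity) (by positivity)]
  exact add_le_add (sum_range_sq_norm_normalizedCoeff_le (by linarith) h1 hn)
    (tsum_sq_norm_normalizedCoeff_tail_le h12 hn)

end Coefficients

section Families

variable {ι : Type*} [Fintype ι] {z : ι → ℂ} {n : ℕ}

lemma iSup_norm_normalizedCoeff_le (hz : ∀ i, 0 ≤ (z i).re ∧ (z i).re < 1) (hn : 0 < n) (j : ℤ) :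
    ⨆ i, ‖normalizedCoeff (z i) n j‖ ≤ (∑ i, 2 / (1 - (z i).re)) * (n : ℝ) ^ (-(1 / 2) : ℝ) := by
  have hC : ∀ i, 0 ≤ 2 / (1 - (z i).re) := fun i => div_nonneg zero_le_two (by linarith [(hz i).2])
  refine Real.iSup_le (fun i => (norm_normalizedCoeff_le (hz i).1 (hz i).2 hn j).trans ?_)
    (mul_nonneg (sum_nonneg fun i _ => hC i) (by positivity))
  gcongr
  exact single_le_sum (fun k _ => hC k) (mem_univ i)

lemma tsum_sq_iSup_norm_normalizedCoeff_le (hz : ∀ i, 1 / 2 < (z i).re ∧ (z i).re < 1)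
    (hn : 0 < n) :
    ∑' j, ENNReal.ofReal ((⨆ i, ‖normalizedCoeff (z i) n j‖) ^ 2)
      ≤ ∑ i, ENNReal.ofReal (8 / (1 - (z i).re) ^ 2 + 1 / (2 * (z i).re - 1)) :=
  calc ∑' j, ENNReal.ofReal ((⨆ i, ‖normalizedCoeff (z i) n j‖) ^ 2)
      ≤ ∑' j, ∑ i, ENNReal.ofReal (‖normalizedCoeff (z i) n j‖ ^ 2) := by
        gcongr with j
        rw [← ENNReal.ofReal_sum_of_nonneg fun i _ => sq_nonneg _]
        exact ENNReal.ofReal_le_ofReal (sq_iSup_le_sum_sq fun i => norm_nonneg _)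
    _ = ∑ i, ∑' j, ENNReal.ofReal (‖normalizedCoeff (z i) n j‖ ^ 2) :=
        Summable.tsum_finsetSum fun _ _ => ENNReal.summable
    _ ≤ _ := sum_le_sum fun i _ => tsum_sq_norm_normalizedCoeff_le (hz i).1 (hz i).2 hn

end Families

theorem coefficient_operators_rackauskas_suquet_general {S : Type*} (d : S → ℂ)
    (p : ℕ) (s : Fin p → S)
    (hh : ∀ i, 1 / 2 < (d (s i)).re ∧ (d (s i)).re < 1)
    (v : S → ℤ → ℂ)
    (hv : ∀ x (j : ℤ), v x j = if 0 ≤ j then ((j : ℂ) + 1) ^ (-(d x)) else 0)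
    (a : ℕ → ℤ → S → ℂ)
    (ha : ∀ (n : ℕ) (j : ℤ) (x : S), a n j x = ∑ k ∈ Finset.Icc (1 : ℤ) (n : ℤ), v x (k - j))
    (Anorm : ℕ → ℤ → ℝ)
    (hAnorm : ∀ (n : ℕ) (j : ℤ),
      Anorm n j = ⨆ i : Fin p, ‖(n : ℂ) ^ (d (s i) - 3 / 2) * a n j (s i)‖) :
    Tendsto (fun n : ℕ => ⨆ j : ℤ, ENNReal.ofReal (Anorm n j)) atTop (nhds 0)
      ∧ Filter.limsup (fun n : ℕ => ∑' j : ℤ, ENNReal.ofReal ((Anorm n j) ^ 2)) atTop < ⊤ := by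
  obtain rfl : Anorm = fun n j => ⨆ i, ‖normalizedCoeff (d (s i)) n j‖ := by
    ext n j
    simp only [hAnorm, ha, hv, normalizedCoeff, partialSumCoeff, powerCoeff]
  set B := ∑ i, 2 / (1 - (d (s i)).re)
  have hB :
      Tendsto (fun n : ℕ => ENNReal.ofReal (B * (n : ℝ) ^ (-(1 / 2) : ℝ))) atTop (nhds 0) := by
    simpa using ENNReal.tendsto_ofReal
      (((tendsto_rpow_neg_atTop (by norm_num)).comp tendsto_natCast_atTop_atTop).const_mul B)
  refine ⟨tendsto_of_tendsto_of_tendsto_of_le_of_le' tendsto_const_nhds hB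
    (Eventually.of_forall fun n => zero_le) ?_, ?_⟩
  · filter_upwards [eventually_gt_atTop 0] with n hn
    exact iSup_le fun j => ENNReal.ofReal_le_ofReal <|
      iSup_norm_normalizedCoeff_le (fun i => ⟨by linarith [(hh i).1], (hh i).2⟩) hn j
  · exact (limsup_le_of_le (by isBoundedDefault) ((eventually_gt_atTop 0).mono fun n hn =>
      tsum_sq_iSup_norm_normalizedCoeff_le hh hn)).trans_lt
      (ENNReal.sum_lt_top.2 fun _ _ => ENNReal.ofReal_lt_top)

/-- **The coefficient operators of the normalized partial sums satisfy the
Rackauskas–Suquet conditions.**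
Fix `s₁, …, s_p ∈ S` with `h(sᵢ) = Re d(sᵢ) ∈ (1/2, 1)` for each `i`, and set
`A_{nj} = diag(n^{d(s₁)−3/2} a_{nj}(s₁), …, n^{d(s_p)−3/2} a_{nj}(s_p))`, whose operator norm is
`‖A_{nj}‖ = max_{1≤i≤p} |n^{d(sᵢ)−3/2} a_{nj}(sᵢ)|`, where `a_{nj}(s) = ∑_{k=1}^n v_{k−j}(s)`
and `v_j(s) = (j+1)^{−d(s)}` for `j ≥ 0`, `v_j(s) = 0` for `j < 0`.
Then `lim_n sup_j ‖A_{nj}‖ = 0` and `limsup_n ∑_j ‖A_{nj}‖² < ∞`. -/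
theorem coefficient_operators_rackauskas_suquet {S : Type*} (d : S → ℂ)
    (p : ℕ) (hp : 0 < p) (s : Fin p → S)
    (hh : ∀ i, 1 / 2 < (d (s i)).re ∧ (d (s i)).re < 1)
    (v : S → ℤ → ℂ)
    (hv : ∀ x (j : ℤ), v x j = if 0 ≤ j then ((j : ℂ) + 1) ^ (-(d x)) else 0)
    (a : ℕ → ℤ → S → ℂ)
    (ha : ∀ (n : ℕ) (j : ℤ) (x : S), a n j x = ∑ k ∈ Finset.Icc (1 : ℤ) (n : ℤ), v x (k - j))
    (Anorm : ℕ → ℤ → ℝ)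
    (hAnorm : ∀ (n : ℕ) (j : ℤ),
      Anorm n j = ⨆ i : Fin p, ‖(n : ℂ) ^ (d (s i) - 3 / 2) * a n j (s i)‖) :
    Tendsto (fun n : ℕ => ⨆ j : ℤ, ENNReal.ofReal (Anorm n j)) atTop (nhds 0)
      ∧ Filter.limsup (fun n : ℕ => ∑' j : ℤ, ENNReal.ofReal ((Anorm n j) ^ 2)) atTop < ⊤ :=
  coefficient_operators_rackauskas_suquet_general d p s hh v hv a ha Anorm hAnorm
end

section
/- Coefficient bound for increments of the partial sums: let 0 ≤ u < t ≤ 1 be such that nt and nu are integers. If h(s) ∈ (1/2,1), then n^{−(3−2h(s))} · ∑_{j=−∞}^{nt} | ∑_{k=nu+1}^{nt} v_{k−j}(s) |² ≤ [ 2/(1−h(s))² + 1/(2h(s)−1) ] · (t−u)^{3−2h(s)}. -/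
/-!
Write `j = N - r` with `N = nt` and `M = n(t - u)`. As `‖v_l‖ = (l+1)^{-h}` and `v` vanishes at
negative indices, the `j`-th term is at most the square of the window sum
`∑_{l = r+1-M}^{r} (l+1)^{-h}`. For `r < 2M` the window sum is at most
`∑_{l < M} (l+1)^{-h} ≤ M^{1-h}/(1-h)` (tangent-line bound for the concave `x^{1-h}`, telescoped);
for `r ≥ 2M` it is at most `M (r+2-M)^{-h}`, and these squares sum to at most `M^{3-2h}/(2h-1)` by
comparison with `∫ x^{-2h}`. Hence the series is at most `(2/(1-h)² + 1/(2h-1)) M^{3-2h}`, and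
`M^{3-2h} = n^{3-2h} (t-u)^{3-2h}`.
-/

open Set

lemma mul_rpow_sub_one_le_rpow_add_one_sub_rpow {p x : ℝ} (hp₀ : 0 ≤ p) (hp₁ : p ≤ 1)
    (hx : 0 ≤ x) : p * (x + 1) ^ (p - 1) ≤ (x + 1) ^ p - x ^ p := by
  have hx₁ : 0 < x + 1 := by linarith
  have hs : -1 ≤ -(x + 1)⁻¹ := neg_le_neg (inv_le_one_of_one_le₀ (by linarith))
  have hsplit : x = (x + 1) * (1 + -(x + 1)⁻¹) := by field_simp; ring
  have hbern := rpow_one_add_le_one_add_mul_self hs hp₀ hp₁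
  calc p * (x + 1) ^ (p - 1) = (x + 1) ^ p - (x + 1) ^ p * (1 + p * -(x + 1)⁻¹) := by
        rw [Real.rpow_sub_one hx₁.ne']; ring
    _ ≤ (x + 1) ^ p - (x + 1) ^ p * (1 + -(x + 1)⁻¹) ^ p := by gcongr
    _ = (x + 1) ^ p - x ^ p := by
        rw [← Real.mul_rpow hx₁.le (by linarith [hs]), ← hsplit]

lemma sum_range_add_one_rpow_neg_le {a : ℝ} (ha₀ : 0 ≤ a) (ha₁ : a < 1) (M : ℕ) :
    ∑ l ∈ Finset.range M, ((l : ℝ) + 1) ^ (-a) ≤ (M : ℝ) ^ (1 - a) / (1 - a) := by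
  rw [le_div_iff₀ (by linarith), Finset.sum_mul]
  calc ∑ l ∈ Finset.range M, ((l : ℝ) + 1) ^ (-a) * (1 - a)
      ≤ ∑ l ∈ Finset.range M, (((l + 1 : ℕ) : ℝ) ^ (1 - a) - (l : ℝ) ^ (1 - a)) := by
        gcongr with l
        push_cast
        have := mul_rpow_sub_one_le_rpow_add_one_sub_rpow (p := 1 - a) (by linarith) (by linarith)
          (Nat.cast_nonneg l)
        rwa [sub_sub_cancel_left, mul_comm] at this
    _ = (M : ℝ) ^ (1 - a) := by
        rw [Finset.sum_range_sub (fun l : ℕ => (l : ℝ) ^ (1 - a))]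
        simp [Real.zero_rpow (by linarith : (1 - a) ≠ 0)]

lemma sum_range_rpow_neg_le {q K : ℝ} (hq : 1 < q) (hK : 0 < K) (n : ℕ) :
    ∑ i ∈ Finset.range n, (K + (i + 1 : ℕ)) ^ (-q) ≤ K ^ (1 - q) / (q - 1) := by
  have hanti : AntitoneOn (fun x : ℝ => x ^ (-q)) (Icc K (K + n)) :=
    (Real.antitoneOn_rpow_Ioi_of_exponent_nonpos (by linarith)).mono
      fun x hx => lt_of_lt_of_le hK hx.1
  have h0 : (0 : ℝ) ∉ uIcc K (K + n) := by
    rw [uIcc_of_le (by linarith [n.cast_nonneg (α := ℝ)])]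
    exact fun h => absurd h.1 (not_le.2 hK)
  refine hanti.sum_le_integral.trans ?_
  rw [integral_rpow (Or.inr ⟨by linarith, h0⟩), neg_add_eq_sub, ← neg_div_neg_eq, neg_sub,
    neg_sub]
  gcongr
  exact sub_le_self _ (by positivity)

lemma Antitone.sum_Ico_le_sum_range {f : ℕ → ℝ} (hf : Antitone f) (hf₀ : ∀ i, 0 ≤ f i)
    {a b M : ℕ} (h : b - a ≤ M) : ∑ i ∈ Finset.Ico a b, f i ≤ ∑ i ∈ Finset.range M, f i := by
  rw [Finset.sum_Ico_eq_sum_range]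
  calc ∑ i ∈ Finset.range (b - a), f (a + i) ≤ ∑ i ∈ Finset.range (b - a), f i :=
        Finset.sum_le_sum fun i _ => hf (Nat.le_add_left i a)
    _ ≤ ∑ i ∈ Finset.range M, f i :=
        Finset.sum_le_sum_of_subset_of_nonneg (Finset.range_mono h) fun i _ _ => hf₀ i

lemma Antitone.sum_Ico_le_card_mul {f : ℕ → ℝ} (hf : Antitone f) (a b : ℕ) :
    ∑ i ∈ Finset.Ico a b, f i ≤ (b - a : ℕ) * f a := by
  simpa using Finset.sum_le_card_nsmul _ f (f a) fun i hi => hf (Finset.mem_Ico.1 hi).1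

/-- Truncated subtraction clips the window `[r + 1 - M, r]` at `0`. -/
noncomputable def windowSum (a : ℝ) (M r : ℕ) : ℝ :=
  ∑ l ∈ Finset.Ico (r + 1 - M) (r + 1), ((l : ℝ) + 1) ^ (-a)

section windowSum

variable {a : ℝ}

lemma antitone_add_one_rpow_neg (ha : 0 ≤ a) : Antitone fun l : ℕ => ((l : ℝ) + 1) ^ (-a) :=
  fun _ _ h => Real.rpow_le_rpow_of_nonpos (by positivity) (by gcongr) (by linarith)

lemma windowSum_nonneg (M r : ℕ) : 0 ≤ windowSum a M r :=
  Finset.sum_nonneg fun _ _ => by positivity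

@[simp] lemma windowSum_zero_length (r : ℕ) : windowSum a 0 r = 0 := by
  simp [windowSum]

lemma windowSum_le (ha₀ : 0 ≤ a) (ha₁ : a < 1) (M r : ℕ) :
    windowSum a M r ≤ (M : ℝ) ^ (1 - a) / (1 - a) :=
  ((antitone_add_one_rpow_neg ha₀).sum_Ico_le_sum_range (fun _ => by positivity)
    (by omega)).trans (sum_range_add_one_rpow_neg_le ha₀ ha₁ M)

lemma windowSum_le_mul (ha : 0 ≤ a) (M r : ℕ) :
    windowSum a M r ≤ M * (((r + 1 - M : ℕ) : ℝ) + 1) ^ (-a) := by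
  refine ((antitone_add_one_rpow_neg ha).sum_Ico_le_card_mul _ _).trans ?_
  gcongr
  exact_mod_cast (by omega : r + 1 - (r + 1 - M) ≤ M)

lemma sum_range_windowSum_sq_le (ha₀ : 1 / 2 < a) (ha₁ : a < 1) (M n : ℕ) :
    ∑ r ∈ Finset.range n, windowSum a M r ^ 2
      ≤ (2 / (1 - a) ^ 2 + 1 / (2 * a - 1)) * (M : ℝ) ^ (3 - 2 * a) := by
  rcases Nat.eq_zero_or_pos M with rfl | hM
  · simp [Real.zero_rpow (by linarith : (3 - 2 * a) ≠ 0)]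
  have hM' : (0 : ℝ) < M := by exact_mod_cast hM
  have hhead : ∀ r, windowSum a M r ^ 2 ≤ (M : ℝ) ^ (2 - 2 * a) / (1 - a) ^ 2 := fun r => by
    calc windowSum a M r ^ 2 ≤ ((M : ℝ) ^ (1 - a) / (1 - a)) ^ 2 :=
          pow_le_pow_left₀ (windowSum_nonneg M r) (windowSum_le (by linarith) ha₁ M r) 2
      _ = (M : ℝ) ^ (2 - 2 * a) / (1 - a) ^ 2 := by
          rw [div_pow, ← Real.rpow_mul_natCast hM'.le]; ring_nf
  have htail : ∀ i : ℕ, windowSum a M (2 * M + i) ^ 2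
      ≤ (M : ℝ) ^ 2 * (((M + 1 : ℕ) : ℝ) + (i + 1 : ℕ)) ^ (-(2 * a)) := fun i => by
    have hc : (((2 * M + i + 1 - M : ℕ) : ℝ) + 1) = ((M + 1 : ℕ) : ℝ) + (i + 1 : ℕ) := by
      rw [show 2 * M + i + 1 - M = M + i + 1 by omega]; push_cast; ring
    calc windowSum a M (2 * M + i) ^ 2
        ≤ ((M : ℝ) * (((2 * M + i + 1 - M : ℕ) : ℝ) + 1) ^ (-a)) ^ 2 :=
          pow_le_pow_left₀ (windowSum_nonneg M _) (windowSum_le_mul (by linarith) M _) 2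
      _ = (M : ℝ) ^ 2 * (((M + 1 : ℕ) : ℝ) + (i + 1 : ℕ)) ^ (-(2 * a)) := by
          rw [hc, mul_pow, ← Real.rpow_mul_natCast (by positivity)]; ring_nf
  have hMsucc : ((M + 1 : ℕ) : ℝ) ^ (1 - 2 * a) ≤ (M : ℝ) ^ (1 - 2 * a) :=
    Real.rpow_le_rpow_of_nonpos hM' (by push_cast; linarith) (by linarith)
  calc ∑ r ∈ Finset.range n, windowSum a M r ^ 2
      ≤ ∑ r ∈ Finset.range (2 * M + n), windowSum a M r ^ 2 :=
        Finset.sum_le_sum_of_subset_of_nonneg (Finset.range_mono (by omega))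
          fun _ _ _ => sq_nonneg _
    _ = ∑ r ∈ Finset.range (2 * M), windowSum a M r ^ 2
          + ∑ i ∈ Finset.range n, windowSum a M (2 * M + i) ^ 2 := Finset.sum_range_add _ _ _
    _ ≤ (2 * M : ℕ) * ((M : ℝ) ^ (2 - 2 * a) / (1 - a) ^ 2)
          + (M : ℝ) ^ 2 * (((M + 1 : ℕ) : ℝ) ^ (1 - 2 * a) / (2 * a - 1)) := by
        gcongr
        · simpa using Finset.sum_le_card_nsmul (Finset.range (2 * M)) _ _ fun r _ => hhead r
        · refine (Finset.sum_le_sum fun i _ => htail i).trans ?_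
          rw [← Finset.mul_sum]
          gcongr
          exact sum_range_rpow_neg_le (by linarith) (by positivity) n
    _ ≤ (2 * M : ℕ) * ((M : ℝ) ^ (2 - 2 * a) / (1 - a) ^ 2)
          + (M : ℝ) ^ 2 * ((M : ℝ) ^ (1 - 2 * a) / (2 * a - 1)) := by
        gcongr
        linarith
    _ = (2 / (1 - a) ^ 2 + 1 / (2 * a - 1)) * (M : ℝ) ^ (3 - 2 * a) := by
        have e₁ : (M : ℝ) ^ (3 - 2 * a) = (M : ℝ) ^ (2 - 2 * a) * M := by
          rw [← Real.rpow_add_one hM'.ne']; ring_nf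
        have e₂ : (M : ℝ) ^ (3 - 2 * a) = (M : ℝ) ^ (1 - 2 * a) * (M : ℝ) ^ 2 := by
          rw [← Real.rpow_add_natCast hM'.ne']; push_cast; ring_nf
        push_cast
        rw [add_mul]
        congr 1
        · rw [e₁]; ring
        · rw [e₂]; ring

end windowSum

lemma sum_Icc_sub_eq_sum_Ico {E : Type*} [AddCommMonoid E] {v : ℤ → E} (hv : ∀ l < 0, v l = 0)
    (m N : ℤ) (r : ℕ) :
    ∑ k ∈ Finset.Icc (m + 1) N, v (k - (N - r))
      = ∑ l ∈ Finset.Ico (r + 1 - (N - m).toNat) (r + 1), v l := by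
  symm
  refine Finset.sum_bij_ne_zero (fun l _ _ => N - r + l) ?_ ?_ ?_ ?_
  · intro l hl _
    simp only [Finset.mem_Ico, Finset.mem_Icc] at hl ⊢
    omega
  · intro l₁ _ _ l₂ _ _ h
    omega
  · intro k hk hvk
    have hk₀ : 0 ≤ k - (N - r) := by
      by_contra h
      exact hvk (hv _ (by omega))
    refine ⟨(k - (N - r)).toNat, ?_, ?_, by omega⟩
    · simp only [Finset.mem_Ico, Finset.mem_Icc] at hk ⊢
      omega
    · rwa [Int.toNat_of_nonneg hk₀]
  · intro l _ _
    congr 1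
    omega

lemma tsum_ite_le_eq_tsum_nat {α : Type*} [AddCommMonoid α] [TopologicalSpace α] (g : ℤ → α)
    (N : ℤ) : ∑' j : ℤ, (if j ≤ N then g j else 0) = ∑' r : ℕ, g (N - r) := by
  have hinj : Function.Injective fun r : ℕ => N - r := fun _ _ h => by simpa using h
  rw [← hinj.tsum_eq]
  · exact tsum_congr fun r => if_pos (by omega)
  · intro j hj
    refine ⟨(N - j).toNat, ?_⟩
    have : j ≤ N := by by_contra h; exact hj (if_neg h)
    show N - ((N - j).toNat : ℤ) = j
    omega

lemma tsum_norm_sum_Icc_sq_le {E : Type*} [SeminormedAddCommGroup E] {v : ℤ → E} {a : ℝ}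
    (ha₀ : 1 / 2 < a) (ha₁ : a < 1) (hv_neg : ∀ l < 0, v l = 0)
    (hv_norm : ∀ l : ℕ, ‖v l‖ = ((l : ℝ) + 1) ^ (-a)) (m N : ℤ) :
    ∑' j : ℤ, (if j ≤ N then ‖∑ k ∈ Finset.Icc (m + 1) N, v (k - j)‖ ^ 2 else 0)
      ≤ (2 / (1 - a) ^ 2 + 1 / (2 * a - 1)) * ((N - m).toNat : ℝ) ^ (3 - 2 * a) := by
  have hinner (r : ℕ) :
      ‖∑ k ∈ Finset.Icc (m + 1) N, v (k - (N - r))‖ ≤ windowSum a (N - m).toNat r := by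
    rw [sum_Icc_sub_eq_sum_Ico hv_neg]
    exact (norm_sum_le _ _).trans_eq (Finset.sum_congr rfl fun l _ => hv_norm l)
  rw [tsum_ite_le_eq_tsum_nat]
  refine Real.tsum_le_of_sum_range_le (fun _ => by positivity) fun K => ?_
  exact (Finset.sum_le_sum fun r _ => pow_le_pow_left₀ (norm_nonneg _) (hinner r) 2).trans
    (sum_range_windowSum_sq_le ha₀ ha₁ _ K)

theorem coefficient_bound_increments_general {S : Type*} (d : S → ℂ) (s : S)
    (h1 : 1 / 2 < (d s).re) (h2 : (d s).re < 1)
    (v : ℤ → ℂ) (hv : ∀ j : ℤ, v j = if 0 ≤ j then ((j : ℂ) + 1) ^ (-(d s)) else 0)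
    (n : ℕ) (t u : ℝ) (hut : u < t)
    (hnt : Int.fract ((n : ℝ) * t) = 0) (hnu : Int.fract ((n : ℝ) * u) = 0) :
    (n : ℝ) ^ (-(3 - 2 * (d s).re)) *
        ∑' j : ℤ, (if j ≤ ⌊(n : ℝ) * t⌋ then
          ‖∑ k ∈ Finset.Icc (⌊(n : ℝ) * u⌋ + 1) ⌊(n : ℝ) * t⌋, v (k - j)‖ ^ 2 else 0)
      ≤ (2 / (1 - (d s).re) ^ 2 + 1 / (2 * (d s).re - 1)) * (t - u) ^ (3 - 2 * (d s).re) := by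
  set a := (d s).re
  have hM : ((⌊(n : ℝ) * t⌋ - ⌊(n : ℝ) * u⌋).toNat : ℝ) = n * (t - u) := by
    have hmN : ⌊(n : ℝ) * u⌋ ≤ ⌊(n : ℝ) * t⌋ := Int.floor_mono (by gcongr)
    rw [Int.fract, sub_eq_zero] at hnt hnu
    rw [← Int.cast_natCast, Int.toNat_of_nonneg (by omega), Int.cast_sub, ← hnt, ← hnu]
    ring
  have hv_neg : ∀ l < 0, v l = 0 := fun l hl => by rw [hv, if_neg (by omega)]
  have hv_norm : ∀ l : ℕ, ‖v l‖ = ((l : ℝ) + 1) ^ (-a) := fun l => by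
    rw [hv, if_pos (by positivity)]
    simpa using Complex.norm_cpow_eq_rpow_re_of_pos (x := (l : ℝ) + 1) (by positivity) (-(d s))
  have hC : 0 ≤ 2 / (1 - a) ^ 2 + 1 / (2 * a - 1) := by
    have : 0 < 2 * a - 1 := by linarith
    positivity
  set C := 2 / (1 - a) ^ 2 + 1 / (2 * a - 1)
  calc (n : ℝ) ^ (-(3 - 2 * a)) * _
      ≤ (n : ℝ) ^ (-(3 - 2 * a)) * (C * (n * (t - u)) ^ (3 - 2 * a)) := by
        rw [← hM]
        exact mul_le_mul_of_nonneg_left (tsum_norm_sum_Icc_sq_le h1 h2 hv_neg hv_norm _ _)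
          (by positivity)
    _ = ((n : ℝ) ^ (3 - 2 * a))⁻¹ * (n : ℝ) ^ (3 - 2 * a) * (C * (t - u) ^ (3 - 2 * a)) := by
        rw [Real.mul_rpow (by positivity) (by linarith), Real.rpow_neg (by positivity)]
        ring
    -- only `x⁻¹ * x ≤ 1`, as `n` may be `0`
    _ ≤ C * (t - u) ^ (3 - 2 * a) :=
        mul_le_of_le_one_left (mul_nonneg hC (Real.rpow_nonneg (by linarith) _)) inv_mul_le_one

/-- **Coefficient bound for increments of the partial sums.**
With `v_j(s) = (j+1)^{−d(s)}` for `j ≥ 0` and `v_j(s) = 0` for `j < 0`, let `0 ≤ u < t ≤ 1` be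
such that `nt` and `nu` are integers.  If `h(s) = Re d(s) ∈ (1/2,1)`, then
`n^{−(3−2h(s))} ∑_{j=−∞}^{nt} |∑_{k=nu+1}^{nt} v_{k−j}(s)|²
  ≤ [2/(1−h(s))² + 1/(2h(s)−1)] (t−u)^{3−2h(s)}`. -/
theorem coefficient_bound_increments {S : Type*} (d : S → ℂ) (s : S)
    (h1 : 1 / 2 < (d s).re) (h2 : (d s).re < 1)
    (v : ℤ → ℂ) (hv : ∀ j : ℤ, v j = if 0 ≤ j then ((j : ℂ) + 1) ^ (-(d s)) else 0)
    (n : ℕ) (hn : 1 ≤ n) (t u : ℝ) (h0u : 0 ≤ u) (hut : u < t) (ht1 : t ≤ 1)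
    (hnt : Int.fract ((n : ℝ) * t) = 0) (hnu : Int.fract ((n : ℝ) * u) = 0) :
    (n : ℝ) ^ (-(3 - 2 * (d s).re)) *
        ∑' j : ℤ, (if j ≤ ⌊(n : ℝ) * t⌋ then
          ‖∑ k ∈ Finset.Icc (⌊(n : ℝ) * u⌋ + 1) ⌊(n : ℝ) * t⌋, v (k - j)‖ ^ 2 else 0)
      ≤ (2 / (1 - (d s).re) ^ 2 + 1 / (2 * (d s).re - 1)) * (t - u) ^ (3 - 2 * (d s).re) :=
  coefficient_bound_increments_general d s h1 h2 v hv n t u hut hnt hnu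
end
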